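/- Let d ≥ 2 and n ≥ 2d, and for each j ∈ {1,…,d} let k^j : X^j × X^j → ℝ satisfy 0 ≤ k^j(x,y) ≤ K^j for all x,y ∈ X^j. Then for every d-tuple π of permutations of {1,…,n} and all datasets X, X̃ of size n with d_ham(X, X̃) ≤ 1, one has |U(X^π) − U(X̃^π)| ≤ (4d^2 + 4d)·(Π_{j=1}^d K^j)/n. -/

import Mathlib

open Finset

noncomputable section

/-- The dHSIC U-statistic of a dataset of size `n`. All sums range over tuples of
pairwise distinct indices. -/
def Ustat {d n : ℕ} {X : Fin d → Type*} (k : ∀ j, X j → X j → ℝ)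
    (D : Fin n → ∀ j, X j) : ℝ :=
  ((n - 2).factorial : ℝ) / (n.factorial : ℝ) *
      ∑ i ∈ Finset.univ.filter (fun i : Fin 2 → Fin n => Function.Injective i),
        ∏ j, k j (D (i 0) j) (D (i 1) j)
    + ((n - 2 * d).factorial : ℝ) / (n.factorial : ℝ) *
        ∑ i ∈ Finset.univ.filter (fun i : Fin (2 * d) → Fin n => Function.Injective i),
          ∏ j, k j (D (i ⟨2 * (j : ℕ), by have := j.isLt; omega⟩) j)
                   (D (i ⟨2 * (j : ℕ) + 1, by have := j.isLt; omega⟩) j)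
    - 2 * ((n - (d + 1)).factorial : ℝ) / (n.factorial : ℝ) *
        ∑ i ∈ Finset.univ.filter (fun i : Fin (d + 1) → Fin n => Function.Injective i),
          ∏ j, k j (D (i ⟨0, by omega⟩) j) (D (i ⟨(j : ℕ) + 1, by have := j.isLt; omega⟩) j)

/-- Dataset permuted by a `d`-tuple of permutations. -/
def permuteD {d n : ℕ} {X : Fin d → Type*} (π : Fin d → Equiv.Perm (Fin n))
    (D : Fin n → ∀ j, X j) : Fin n → ∀ j, X j :=
  fun i j => D (π j i) j

/-- Hamming distance between two datasets. -/
def hamD {d n : ℕ} {X : Fin d → Type*} (D D' : Fin n → ∀ j, X j) : ℕ :=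
  Set.ncard {i | D i ≠ D' i}

/-!
Changing one data point changes at most `d` rows of the permuted dataset, one for each
coordinate permutation. Each of the three sums of `U` runs over injective `m`-tuples of rows, and
by symmetry a fixed slot of such a tuple hits a given row for exactly a `1/n` fraction of them;
so at most an `m d / n` fraction of the tuples is affected, and each affected product moves by at
most `∏ K j`. Normalising and adding the sums for `m = 2`, `m = 2d` and twice `m = d + 1` gives
`(2 + 2d + 2(d + 1)) d = 4d² + 4d`.
-/

open Function

section InjectiveTuples

variable {m n : ℕ}

theorem card_injective_fiber_eq (a : Fin m) (c c' : Fin n) :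
    #{i : Fin m → Fin n | Injective i ∧ i a = c} =
      #{i : Fin m → Fin n | Injective i ∧ i a = c'} := by
  refine card_nbij' (Equiv.swap c c' ∘ ·) (Equiv.swap c c' ∘ ·) ?_ ?_ ?_ ?_ <;>
    simp +contextual [Set.MapsTo, Set.LeftInvOn, (Equiv.injective _).of_comp_iff, funext_iff]

theorem mul_card_injective_fiber (a : Fin m) (c : Fin n) :
    n * #{i : Fin m → Fin n | Injective i ∧ i a = c} = n.descFactorial m := by
  calc n * #{i : Fin m → Fin n | Injective i ∧ i a = c}
      = ∑ c' : Fin n, #{i : Fin m → Fin n | Injective i ∧ i a = c'} := by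
        simp [card_injective_fiber_eq a _ c]
    _ = #{i : Fin m → Fin n | Injective i} := by
        rw [card_eq_sum_card_fiberwise (f := fun i => i a) (t := univ) fun _ _ => mem_univ _]
        simp only [filter_filter]
    _ = n.descFactorial m := by
        rw [← Fintype.card_subtype, Fintype.card_congr (Equiv.subtypeInjectiveEquivEmbedding _ _)]
        simp [Fintype.card_embedding_eq]

theorem mul_card_injective_hitting_le (S : Finset (Fin n)) :
    n * #{i : Fin m → Fin n | Injective i ∧ ∃ a, i a ∈ S}
      ≤ m * #S * n.descFactorial m := by
  calc n * #{i : Fin m → Fin n | Injective i ∧ ∃ a, i a ∈ S}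
      ≤ n * ∑ a : Fin m, #{i : Fin m → Fin n | Injective i ∧ i a ∈ S} := by
        gcongr
        refine (card_le_card fun i hi => ?_).trans card_biUnion_le
        simp only [mem_filter, mem_univ, true_and, mem_biUnion] at hi ⊢
        obtain ⟨hi, a, ha⟩ := hi
        exact ⟨a, hi, ha⟩
    _ = ∑ a : Fin m, ∑ c ∈ S, n * #{i : Fin m → Fin n | Injective i ∧ i a = c} := by
        rw [mul_sum]
        refine sum_congr rfl fun a _ => ?_
        rw [card_eq_sum_card_fiberwise (f := fun i => i a) (t := S)
          fun i hi => (mem_filter.mp hi).2.2, mul_sum]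
        refine sum_congr rfl fun c hc => ?_
        rw [filter_filter]
        congr 2
        exact filter_congr fun i _ =>
          ⟨fun h => ⟨h.1.1, h.2⟩, fun h => ⟨⟨h.1, h.2 ▸ hc⟩, h.2⟩⟩
    _ = m * #S * n.descFactorial m := by simp [mul_card_injective_fiber, mul_assoc]

theorem factorial_div_mul_card_injective_hitting_le (S : Finset (Fin n)) :
    ((n - m).factorial / n.factorial : ℝ) *
        #{i : Fin m → Fin n | Injective i ∧ ∃ a, i a ∈ S}
      ≤ m * #S / n := by
  set T := ({i : Fin m → Fin n | Injective i ∧ ∃ a, i a ∈ S} : Finset _)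
  obtain hT | ⟨i, hi⟩ := T.eq_empty_or_nonempty
  · rw [hT, card_empty, Nat.cast_zero, mul_zero]
    positivity
  obtain ⟨hinj, a, -⟩ := (mem_filter.mp hi).2
  have hmn : m ≤ n := by simpa using Fintype.card_le_of_injective i hinj
  have hn : (0 : ℝ) < n := by exact_mod_cast (i a).pos
  have hcount : n * #T * (n - m).factorial ≤ m * #S * n.factorial := by
    have := Nat.mul_le_mul_right (n - m).factorial (mul_card_injective_hitting_le (m := m) S)
    rw [← Nat.factorial_mul_descFactorial hmn]
    linarith
  rw [div_mul_eq_mul_div, div_le_div_iff₀ (by positivity) hn]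
  exact_mod_cast (by linarith : (n - m).factorial * #T * n ≤ m * #S * n.factorial)

theorem factorial_div_mul_abs_sum_injective_sub_le (S : Finset (Fin n))
    {F G : (Fin m → Fin n) → ℝ} {C : ℝ} (hC : 0 ≤ C) (hFG : ∀ i, |F i - G i| ≤ C)
    (heq : ∀ i, (∀ a, i a ∉ S) → F i = G i) :
    ((n - m).factorial / n.factorial : ℝ) *
        |∑ i ∈ {i : Fin m → Fin n | Injective i}, F i
          - ∑ i ∈ {i : Fin m → Fin n | Injective i}, G i|
      ≤ m * #S * C / n := by
  have hsum : |∑ i ∈ {i : Fin m → Fin n | Injective i}, F i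
      - ∑ i ∈ {i : Fin m → Fin n | Injective i}, G i|
        ≤ #{i : Fin m → Fin n | Injective i ∧ ∃ a, i a ∈ S} * C := by
    have hsupp : ∀ i ∈ ({i : Fin m → Fin n | Injective i} : Finset _), F i - G i ≠ 0 →
        ∃ a, i a ∈ S := fun i _ hne => by
      by_contra! h
      exact hne (sub_eq_zero.mpr (heq i h))
    rw [← sum_sub_distrib, ← sum_filter_of_ne hsupp, filter_filter, ← nsmul_eq_mul]
    exact (abs_sum_le_sum_abs _ _).trans (sum_le_card_nsmul _ _ _ fun i _ => hFG i)
  calc ((n - m).factorial / n.factorial : ℝ) *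
        |∑ i ∈ {i : Fin m → Fin n | Injective i}, F i
          - ∑ i ∈ {i : Fin m → Fin n | Injective i}, G i|
      ≤ ((n - m).factorial / n.factorial : ℝ) *
          #{i : Fin m → Fin n | Injective i ∧ ∃ a, i a ∈ S} * C := by
        rw [mul_assoc]; gcongr
    _ ≤ m * #S / n * C := by gcongr; exact factorial_div_mul_card_injective_hitting_le S
    _ = m * #S * C / n := by ring

end InjectiveTuples

section Datasets

variable {d n : ℕ} {X : Fin d → Type*}

theorem hamD_permuteD_le (π : Fin d → Equiv.Perm (Fin n)) (D D' : Fin n → ∀ j, X j) :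
    hamD (permuteD π D) (permuteD π D') ≤ d * hamD D D' := by
  have hsub : {x | permuteD π D x ≠ permuteD π D' x}
      ⊆ ⋃ j ∈ (univ : Finset (Fin d)), π j ⁻¹' {i | D i ≠ D' i} := by
    intro x hx
    obtain ⟨j, hj⟩ := Function.ne_iff.mp hx
    exact Set.mem_biUnion (mem_univ j) fun h => hj (congrFun h j)
  calc hamD (permuteD π D) (permuteD π D')
      ≤ ∑ j : Fin d, (π j ⁻¹' {i | D i ≠ D' i}).ncard :=
        (Set.ncard_le_ncard hsub).trans (set_ncard_biUnion_le _ _)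
    _ = ∑ _j : Fin d, hamD D D' := sum_congr rfl fun j _ =>
        Set.ncard_preimage_of_injective_subset_range (π j).injective (by simp)
    _ = d * hamD D D' := by simp

def ustatTerm {m : ℕ} (k : ∀ j, X j → X j → ℝ) (P : Fin n → ∀ j, X j)
    (a b : Fin d → Fin m) : ℝ :=
  ((n - m).factorial / n.factorial : ℝ) *
    ∑ i ∈ {i : Fin m → Fin n | Injective i}, ∏ j, k j (P (i (a j)) j) (P (i (b j)) j)

theorem Ustat_eq_ustatTerm (k : ∀ j, X j → X j → ℝ) (P : Fin n → ∀ j, X j) :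
    Ustat k P = ustatTerm (m := 2) k P (fun _ => 0) (fun _ => 1)
      + ustatTerm (m := 2 * d) k P (fun j => ⟨2 * (j : ℕ), by have := j.isLt; omega⟩)
        (fun j => ⟨2 * (j : ℕ) + 1, by have := j.isLt; omega⟩)
      - 2 * ustatTerm (m := d + 1) k P (fun _ => ⟨0, by omega⟩)
        (fun j => ⟨(j : ℕ) + 1, by have := j.isLt; omega⟩) := by
  simp only [Ustat, ustatTerm]
  ring

theorem abs_ustatTerm_sub_le {m : ℕ} (k : ∀ j, X j → X j → ℝ) (K : Fin d → ℝ)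
    (hbdd : ∀ j, ∀ x y : X j, 0 ≤ k j x y ∧ k j x y ≤ K j) (hK : 0 ≤ ∏ j, K j)
    (P P' : Fin n → ∀ j, X j) (a b : Fin d → Fin m) :
    |ustatTerm k P a b - ustatTerm k P' a b| ≤ m * hamD P P' * (∏ j, K j) / n := by
  classical
  have hprod : ∀ (Q : Fin n → ∀ j, X j) (i : Fin m → Fin n),
      0 ≤ ∏ j, k j (Q (i (a j)) j) (Q (i (b j)) j) ∧
        ∏ j, k j (Q (i (a j)) j) (Q (i (b j)) j) ≤ ∏ j, K j :=
    fun Q i => ⟨prod_nonneg fun j _ => (hbdd j _ _).1,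
      prod_le_prod (fun j _ => (hbdd j _ _).1) fun j _ => (hbdd j _ _).2⟩
  have hham : hamD P P' = #{x | P x ≠ P' x} := by
    rw [hamD, ← Set.ncard_coe_finset, coe_filter]; simp
  rw [ustatTerm, ustatTerm, ← mul_sub, abs_mul, abs_of_nonneg (by positivity), hham]
  refine factorial_div_mul_abs_sum_injective_sub_le _ hK
    (fun i => abs_sub_le_of_nonneg_of_le (hprod P i).1 (hprod P i).2 (hprod P' i).1 (hprod P' i).2)
    fun i hi => ?_
  refine prod_congr rfl fun j _ => ?_
  have hrow : ∀ x, x ∉ ({x | P x ≠ P' x} : Finset _) → P x = P' x := by simp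
  rw [hrow _ (hi _), hrow _ (hi _)]

end Datasets

theorem sensitivity_permuted_dHSIC_Ustatistic_general
    {d n : ℕ}
    (X : Fin d → Type*) (k : ∀ j, X j → X j → ℝ) (K : Fin d → ℝ)
    (hbdd : ∀ j, ∀ x y : X j, 0 ≤ k j x y ∧ k j x y ≤ K j)
    (π : Fin d → Equiv.Perm (Fin n))
    (D D' : Fin n → ∀ j, X j) (hham : hamD D D' ≤ 1) :
    |Ustat k (permuteD π D) - Ustat k (permuteD π D')|
      ≤ (4 * (d : ℝ) ^ 2 + 4 * (d : ℝ)) * (∏ j, K j) / (n : ℝ) := by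
  rcases n.eq_zero_or_pos with rfl | hn
  · rw [Subsingleton.elim D D', sub_self, abs_zero, Nat.cast_zero, div_zero]
  have hK : 0 ≤ ∏ j, K j := prod_nonneg fun j _ =>
    (hbdd j (D ⟨0, hn⟩ j) (D ⟨0, hn⟩ j)).1.trans (hbdd j _ _).2
  have hπ : (hamD (permuteD π D) (permuteD π D') : ℝ) ≤ d := by
    exact_mod_cast (hamD_permuteD_le π D D').trans (by simpa using Nat.mul_le_mul_left d hham)
  have hterm : ∀ {m} (a b : Fin d → Fin m),
      |ustatTerm k (permuteD π D) a b - ustatTerm k (permuteD π D') a b|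
        ≤ m * d * (∏ j, K j) / n :=
    fun a b => (abs_ustatTerm_sub_le k K hbdd hK _ _ a b).trans (by gcongr)
  have htri : ∀ a b c a' b' c' : ℝ,
      |a + b - 2 * c - (a' + b' - 2 * c')| ≤ |a - a'| + |b - b'| + 2 * |c - c'| :=
    fun a b c a' b' c' => abs_le.mpr
      ⟨by linarith [neg_abs_le (a - a'), neg_abs_le (b - b'), le_abs_self (c - c')],
        by linarith [le_abs_self (a - a'), le_abs_self (b - b'), neg_abs_le (c - c')]⟩
  rw [Ustat_eq_ustatTerm, Ustat_eq_ustatTerm]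
  calc _ ≤ _ := htri _ _ _ _ _ _
    _ ≤ ((2 : ℕ) : ℝ) * d * (∏ j, K j) / n + ((2 * d : ℕ) : ℝ) * d * (∏ j, K j) / n
          + 2 * (((d + 1 : ℕ) : ℝ) * d * (∏ j, K j) / n) := by
        gcongr <;> exact hterm _ _
    _ = (4 * (d : ℝ) ^ 2 + 4 * (d : ℝ)) * (∏ j, K j) / (n : ℝ) := by
        push_cast; ring

/-- sensitivity of the permuted dHSIC U-statistic. -/
theorem sensitivity_permuted_dHSIC_Ustatistic
    {d n : ℕ} (hd : 2 ≤ d) (hn : 2 * d ≤ n)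
    (X : Fin d → Type*) (k : ∀ j, X j → X j → ℝ) (K : Fin d → ℝ)
    (hbdd : ∀ j, ∀ x y : X j, 0 ≤ k j x y ∧ k j x y ≤ K j)
    (π : Fin d → Equiv.Perm (Fin n))
    (D D' : Fin n → ∀ j, X j) (hham : hamD D D' ≤ 1) :
    |Ustat k (permuteD π D) - Ustat k (permuteD π D')|
      ≤ (4 * (d : ℝ) ^ 2 + 4 * (d : ℝ)) * (∏ j, K j) / (n : ℝ) :=
  sensitivity_permuted_dHSIC_Ustatistic_general X k K hbdd π D D' hham

end
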